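/- (η-weighted advantage telescoping identity.) In the finite MDP setting with weights η : ℕ → ℝ, η(k) ≥ 0, ∑_k η(k) = 1, let c : S × A → ℝ, let p₀ ∈ PMF S, and let π and π' be policies. Define v_{π'}(s) = ∑_t γ^t ∑_{(s',a')} P^t_{π'}((s',a')|s)·c(s',a') and the advantage A_{π'}(s,a) = c(s,a) + γ ∑_{s'} 𝒫(s,a)(s')·v_{π'}(s') − v_{π'}(s). Then ∑_{s₀} p₀(s₀) ∑_{(s,a)} μ_π((s,a)|s₀)·A_{π'}(s,a) = ∑_{s₀} p₀(s₀) ∑_{(s,a)} μ_π((s,a)|s₀)·c(s,a) − ∑_{s₀} p₀(s₀) ∑_{(s,a)} P^η_π((s,a)|s₀)·v_{π'}(s). -/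

import Mathlib

/-!
Write the advantage as `c + (γ • T v - v)`, where `T` is one transition step. Since one step of
`π` carries `P^n_π` to `P^{n+1}_π`, the term `γ 𝔼_μ[T v]` is the `μ_π`-sum with the time index
shifted by one, `∑_{t ≥ 1} ∑_k γ^t η(k) 𝔼_{P^{t+k}_π}[v]`, so subtracting `𝔼_μ[v]` leaves only the
`t = 0` layer `∑_k η(k) 𝔼_{P^k_π}[v] = 𝔼_{P^η_π}[v]`. The identity holds for every `v : S → ℝ`.
Everything converges absolutely because the `P^n_π` are probability distributions and
`∑_{t,k} γ^t η(k) < ∞`, which lets the finite sums over `S × A` pass through the series.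
-/

open scoped BigOperators Classical

/-- `n`-step state–action distribution of the stationary policy `π` started at a state. -/
noncomputable def PstepS {S A : Type*} [Fintype S] [Fintype A]
    (P : S × A → PMF S) (π : S → PMF A) : ℕ → S → S × A → ℝ
  | 0, s₀, x => if x.1 = s₀ then (π x.1 x.2).toReal else 0
  | n + 1, s₀, x => ∑ y : S × A, PstepS P π n s₀ y * (P y x.1).toReal * (π x.1 x.2).toReal

/-- `n`-step state–action distribution of `π` started at a state–action pair. -/
noncomputable def PstepSA {S A : Type*} [Fintype S] [Fintype A]
    (P : S × A → PMF S) (π : S → PMF A) : ℕ → S × A → S × A → ℝ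
  | 0, y, x => if x = y then 1 else 0
  | n + 1, y, x => ∑ z : S × A, PstepSA P π n y z * (P z x.1).toReal * (π x.1 x.2).toReal

/-- η-weighted future state distribution, started at a state. -/
noncomputable def PetaS {S A : Type*} [Fintype S] [Fintype A]
    (P : S × A → PMF S) (π : S → PMF A) (η : ℕ → ℝ) (s₀ : S) (x : S × A) : ℝ :=
  ∑' k, η k * PstepS P π k s₀ x

/-- η-weighted future state distribution, started at a state–action pair. -/
noncomputable def PetaSA {S A : Type*} [Fintype S] [Fintype A]
    (P : S × A → PMF S) (π : S → PMF A) (η : ℕ → ℝ) (y : S × A) (x : S × A) : ℝ :=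
  ∑' k, η k * PstepSA P π k y x

/-- γ-discounted occupancy measure, started at a state. -/
noncomputable def rhoS {S A : Type*} [Fintype S] [Fintype A]
    (P : S × A → PMF S) (π : S → PMF A) (γ : ℝ) (s₀ : S) (x : S × A) : ℝ :=
  ∑' t, γ ^ t * PstepS P π t s₀ x

/-- γ-discounted occupancy measure, started at a state–action pair. -/
noncomputable def rhoSA {S A : Type*} [Fintype S] [Fintype A]
    (P : S × A → PMF S) (π : S → PMF A) (γ : ℝ) (y : S × A) (x : S × A) : ℝ :=
  ∑' t, γ ^ t * PstepSA P π t y x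

/-- η-weighted, γ-discounted future occupancy measure `μ_π`. -/
noncomputable def muS {S A : Type*} [Fintype S] [Fintype A]
    (P : S × A → PMF S) (π : S → PMF A) (γ : ℝ) (η : ℕ → ℝ) (s₀ : S) (x : S × A) : ℝ :=
  ∑' t, ∑' k, γ ^ t * η k * PstepS P π (t + k) s₀ x

/-- State value function `v_π(s) = ∑_t γ^t ∑_{(s',a')} P^t_π((s',a')|s) c(s',a')`. -/
noncomputable def vVal {S A : Type*} [Fintype S] [Fintype A]
    (P : S × A → PMF S) (π : S → PMF A) (γ : ℝ) (c : S × A → ℝ) (s : S) : ℝ :=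
  ∑' t, γ ^ t * ∑ x : S × A, PstepS P π t s x * c x

/-- Advantage function `A_π(s,a) = c(s,a) + γ E_{s'|s,a}[v_π(s')] − v_π(s)`. -/
noncomputable def advVal {S A : Type*} [Fintype S] [Fintype A]
    (P : S × A → PMF S) (π : S → PMF A) (γ : ℝ) (c : S × A → ℝ) (x : S × A) : ℝ :=
  c x + γ * (∑ s' : S, (P x s').toReal * vVal P π γ c s') - vVal P π γ c x.1

lemma PMF.sum_toReal_eq_one {α : Type*} [Fintype α] (p : PMF α) :
    ∑ a, (p a).toReal = 1 := by
  have h := p.tsum_coe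
  rw [tsum_fintype] at h
  rw [← ENNReal.toReal_sum fun a _ => p.apply_ne_top a, h, ENNReal.toReal_one]

section Summation

variable {γ : ℝ} {η : ℕ → ℝ} {u : ℕ → ℝ} {M : ℝ}

lemma summable_discounted_mixture (hγ0 : 0 ≤ γ) (hγ1 : γ < 1) (hη0 : ∀ k, 0 ≤ η k)
    (hηs : Summable η) (hu : ∀ n, |u n| ≤ M) :
    Summable fun p : ℕ × ℕ => γ ^ p.1 * η p.2 * u (p.1 + p.2) := by
  have hweights : Summable fun p : ℕ × ℕ => γ ^ p.1 * η p.2 :=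
    (summable_geometric_of_lt_one hγ0 hγ1).mul_of_nonneg hηs (fun t => pow_nonneg hγ0 t) hη0
  refine Summable.of_norm_bounded (hweights.mul_right M) fun ⟨t, k⟩ => ?_
  rw [Real.norm_eq_abs, abs_mul, abs_of_nonneg (mul_nonneg (pow_nonneg hγ0 t) (hη0 k))]
  exact mul_le_mul_of_nonneg_left (hu _) (mul_nonneg (pow_nonneg hγ0 t) (hη0 k))

lemma mul_tsum_discounted_mixture_succ (hγ0 : 0 ≤ γ) (hγ1 : γ < 1) (hη0 : ∀ k, 0 ≤ η k)
    (hηs : Summable η) (hu : ∀ n, |u n| ≤ M) :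
    γ * ∑' t, ∑' k, γ ^ t * η k * u (t + k + 1) =
      ∑' t, ∑' k, γ ^ t * η k * u (t + k) - ∑' k, η k * u k := by
  set h : ℕ → ℝ := fun t => ∑' k, γ ^ t * η k * u (t + k)
  have hsum : Summable h := (summable_discounted_mixture hγ0 hγ1 hη0 hηs hu).prod
  have hshift : γ * ∑' t, ∑' k, γ ^ t * η k * u (t + k + 1) = ∑' t, h (t + 1) := by
    rw [← tsum_mul_left]
    refine tsum_congr fun t => ?_
    rw [← tsum_mul_left]
    refine tsum_congr fun k => ?_
    rw [add_right_comm, pow_succ]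
    ring
  have h0 : h 0 = ∑' k, η k * u k := by simp [h]
  rw [hshift, hsum.tsum_eq_zero_add, h0]
  ring

end Summation

lemma Finset.sum_tsum_tsum_comm {ι β γ : Type*} [Fintype ι] {F : ι → β × γ → ℝ}
    (hF : ∀ i, Summable (F i)) :
    ∑ i, ∑' b, ∑' c, F i (b, c) = ∑' b, ∑' c, ∑ i, F i (b, c) := by
  rw [← Summable.tsum_finsetSum fun i _ => (hF i).prod]
  refine tsum_congr fun b => ?_
  rw [← Summable.tsum_finsetSum fun i _ => (hF i).prod_factor b]

section StateActionChain

variable {S A : Type*} [Fintype S] [Fintype A] {P : S × A → PMF S} {π : S → PMF A}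

lemma PstepS_nonneg (n : ℕ) (s₀ : S) (x : S × A) : 0 ≤ PstepS P π n s₀ x := by
  induction n generalizing x with
  | zero => unfold PstepS; split_ifs <;> positivity
  | succ n ih => unfold PstepS; exact Finset.sum_nonneg fun y _ => by have := ih y; positivity

lemma sum_PstepS_succ_mul_fst (n : ℕ) (s₀ : S) (v : S → ℝ) :
    ∑ x, PstepS P π (n + 1) s₀ x * v x.1 =
      ∑ y, PstepS P π n s₀ y * ∑ s', (P y s').toReal * v s' := by
  have hfiber : ∀ y s', ∑ a, PstepS P π n s₀ y * (P y s').toReal * (π s' a).toReal * v s' =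
      PstepS P π n s₀ y * ((P y s').toReal * v s') := fun y s' => by
    rw [← Finset.sum_mul, ← Finset.mul_sum, PMF.sum_toReal_eq_one]; ring
  simp only [PstepS, Finset.sum_mul]
  rw [Finset.sum_comm]
  refine Finset.sum_congr rfl fun y _ => ?_
  rw [Fintype.sum_prod_type, Finset.mul_sum]
  exact Finset.sum_congr rfl fun s' _ => hfiber y s'

lemma sum_PstepS (n : ℕ) (s₀ : S) : ∑ x, PstepS P π n s₀ x = 1 := by
  induction n with
  | zero => simp [PstepS, Fintype.sum_prod_type, PMF.sum_toReal_eq_one]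
  | succ n ih =>
    simpa [PMF.sum_toReal_eq_one, ih] using sum_PstepS_succ_mul_fst (P := P) (π := π) n s₀ 1

lemma PstepS_le_one (n : ℕ) (s₀ : S) (x : S × A) : PstepS P π n s₀ x ≤ 1 :=
  (Finset.single_le_sum (fun y _ => PstepS_nonneg n s₀ y) (Finset.mem_univ x)).trans_eq
    (sum_PstepS n s₀)

lemma abs_PstepS_mul_le (n : ℕ) (s₀ : S) (x : S × A) (b : ℝ) :
    |PstepS P π n s₀ x * b| ≤ |b| := by
  rw [abs_mul, abs_of_nonneg (PstepS_nonneg n s₀ x)]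
  exact mul_le_of_le_one_left (abs_nonneg b) (PstepS_le_one n s₀ x)

lemma abs_sum_PstepS_mul_le (n : ℕ) (s₀ : S) (f : S × A → ℝ) :
    |∑ x, PstepS P π n s₀ x * f x| ≤ ∑ x, |f x| :=
  (Finset.abs_sum_le_sum_abs _ _).trans
    (Finset.sum_le_sum fun x _ => abs_PstepS_mul_le n s₀ x (f x))

end StateActionChain

section Occupancy

variable {S A : Type*} [Fintype S] [Fintype A] {P : S × A → PMF S} {π : S → PMF A}
  {γ : ℝ} {η : ℕ → ℝ}

lemma sum_muS_mul (hγ0 : 0 ≤ γ) (hγ1 : γ < 1) (hη0 : ∀ k, 0 ≤ η k) (hηs : Summable η)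
    (s₀ : S) (f : S × A → ℝ) :
    ∑ x, muS P π γ η s₀ x * f x =
      ∑' t, ∑' k, γ ^ t * η k * ∑ x, PstepS P π (t + k) s₀ x * f x := by
  have hx : ∀ x, muS P π γ η s₀ x * f x =
      ∑' t, ∑' k, γ ^ t * η k * (PstepS P π (t + k) s₀ x * f x) := fun x => by
    rw [muS, ← tsum_mul_right]
    refine tsum_congr fun t => ?_
    rw [← tsum_mul_right]
    exact tsum_congr fun k => by ring
  simp only [hx, Finset.mul_sum]
  exact Finset.sum_tsum_tsum_comm fun x =>
    summable_discounted_mixture hγ0 hγ1 hη0 hηs (abs_PstepS_mul_le · s₀ x (f x))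

lemma sum_PetaS_mul (hη0 : ∀ k, 0 ≤ η k) (hηs : Summable η) (s₀ : S) (f : S × A → ℝ) :
    ∑ x, PetaS P π η s₀ x * f x = ∑' k, η k * ∑ x, PstepS P π k s₀ x * f x := by
  have hx : ∀ x, PetaS P π η s₀ x * f x = ∑' k, η k * (PstepS P π k s₀ x * f x) := fun x => by
    rw [PetaS, ← tsum_mul_right]
    exact tsum_congr fun k => by ring
  simp only [hx, Finset.mul_sum]
  refine (Summable.tsum_finsetSum fun x _ => ?_).symm
  refine Summable.of_norm_bounded (hηs.mul_right |f x|) fun k => ?_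
  rw [Real.norm_eq_abs, abs_mul, abs_of_nonneg (hη0 k)]
  exact mul_le_mul_of_nonneg_left (abs_PstepS_mul_le k s₀ x (f x)) (hη0 k)

lemma mul_sum_muS_mul_transition (hγ0 : 0 ≤ γ) (hγ1 : γ < 1) (hη0 : ∀ k, 0 ≤ η k)
    (hηs : Summable η) (s₀ : S) (v : S → ℝ) :
    γ * ∑ x, muS P π γ η s₀ x * ∑ s', (P x s').toReal * v s' =
      ∑ x, muS P π γ η s₀ x * v x.1 - ∑ x, PetaS P π η s₀ x * v x.1 := by
  rw [sum_muS_mul hγ0 hγ1 hη0 hηs, sum_muS_mul hγ0 hγ1 hη0 hηs, sum_PetaS_mul hη0 hηs]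
  simp only [← sum_PstepS_succ_mul_fst]
  exact mul_tsum_discounted_mixture_succ hγ0 hγ1 hη0 hηs
    (u := fun n => ∑ x, PstepS P π n s₀ x * v x.1) (abs_sum_PstepS_mul_le · s₀ _)

end Occupancy

theorem stmt19_general {S A : Type*} [Fintype S] [Fintype A]
    (P : S × A → PMF S) (γ : ℝ) (hγ : γ ∈ Set.Ioo (0 : ℝ) 1)
    (η : ℕ → ℝ) (hη0 : ∀ k, 0 ≤ η k) (hη1 : ∑' k, η k = 1)
    (c : S × A → ℝ) (p₀ : PMF S) (π π' : S → PMF A) :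
    (∑ s₀ : S, (p₀ s₀).toReal *
        ∑ x : S × A, muS P π γ η s₀ x * advVal P π' γ c x) =
      (∑ s₀ : S, (p₀ s₀).toReal *
        ∑ x : S × A, muS P π γ η s₀ x * c x) -
      ∑ s₀ : S, (p₀ s₀).toReal *
        ∑ x : S × A, PetaS P π η s₀ x * vVal P π' γ c x.1 := by
  obtain ⟨hγ0, hγ1⟩ := hγ
  have hηs : Summable η := by
    by_contra h
    simp [tsum_eq_zero_of_not_summable h] at hη1
  have hstate : ∀ s₀, ∑ x, muS P π γ η s₀ x * advVal P π' γ c x =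
      ∑ x, muS P π γ η s₀ x * c x - ∑ x, PetaS P π η s₀ x * vVal P π' γ c x.1 := fun s₀ => by
    have hsplit : ∑ x, muS P π γ η s₀ x * advVal P π' γ c x =
        ∑ x, muS P π γ η s₀ x * c x +
          γ * ∑ x, muS P π γ η s₀ x * ∑ s', (P x s').toReal * vVal P π' γ c s' -
          ∑ x, muS P π γ η s₀ x * vVal P π' γ c x.1 := by
      simp only [advVal, mul_sub, mul_add, Finset.sum_sub_distrib, Finset.sum_add_distrib,
        Finset.mul_sum, mul_left_comm γ]
    rw [hsplit, mul_sum_muS_mul_transition hγ0.le hγ1 hη0 hηs]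
    ring
  simp only [hstate, mul_sub, Finset.sum_sub_distrib]

theorem stmt19 {S A : Type*} [Fintype S] [Fintype A] [Nonempty S] [Nonempty A]
    (P : S × A → PMF S) (γ : ℝ) (hγ : γ ∈ Set.Ioo (0 : ℝ) 1)
    (η : ℕ → ℝ) (hη0 : ∀ k, 0 ≤ η k) (hη1 : ∑' k, η k = 1)
    (c : S × A → ℝ) (p₀ : PMF S) (π π' : S → PMF A) :
    (∑ s₀ : S, (p₀ s₀).toReal *
        ∑ x : S × A, muS P π γ η s₀ x * advVal P π' γ c x) =
      (∑ s₀ : S, (p₀ s₀).toReal *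
        ∑ x : S × A, muS P π γ η s₀ x * c x) -
      ∑ s₀ : S, (p₀ s₀).toReal *
        ∑ x : S × A, PetaS P π η s₀ x * vVal P π' γ c x.1 :=
  stmt19_general P γ hγ η hη0 hη1 c p₀ π π'
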